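/- Let X be a smooth projective variety over an algebraically closed field of characteristic zero. The function D ↦ a(X,D) is continuous on the big cone Big^1(X) ⊂ NS(X,ℝ). -/

import Mathlib

/-!
An abstract framework for the Fujita invariant `a(X,L)`, the invariant `b(X,L)`,
and related notions from the theory of balanced line bundles
(Hassett–Tanimoto–Tschinkel, "Balanced line bundles and equivariant
compactifications of homogeneous spaces").

A `Variety` packages the data attached to a projective variety over an
algebraically closed field of characteristic zero that is needed to state the
results: the Néron–Severi space together with its pseudo-effective, big, nef and
ample cones, the canonical class, intersection-theoretic data, and the
qualitative geometric predicates occurring in the statements.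
-/

noncomputable section

structure Variety where
  /-- the set of closed points, with the Zariski topology -/
  Point : Type
  [topPoint : TopologicalSpace Point]
  /-- the Néron–Severi space `NS(X, ℝ)` -/
  NS : Type
  [addCommGroupNS : AddCommGroup NS]
  [moduleNS : Module ℝ NS]
  [finDimNS : FiniteDimensional ℝ NS]
  [topNS : TopologicalSpace NS]
  [topAddGroupNS : IsTopologicalAddGroup NS]
  [contSMulNS : ContinuousSMul ℝ NS]
  [t2NS : T2Space NS]
  /-- the pseudo-effective cone `Λ_eff(X)`: the closure of the cone of classes
  of effective ℝ-divisors -/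
  effCone : Set NS
  effCone_closed : IsClosed effCone
  effCone_convex : Convex ℝ effCone
  effCone_smul : ∀ c : ℝ, 0 ≤ c → ∀ v ∈ effCone, c • v ∈ effCone
  /-- the big cone `Big¹(X)`, the interior of the pseudo-effective cone -/
  bigCone : Set NS
  bigCone_eq : bigCone = interior effCone
  /-- the nef cone -/
  nefCone : Set NS
  /-- the ample cone -/
  ampleCone : Set NS
  /-- the canonical class `[K_X]` -/
  canonicalClass : NS
  /-- the dimension of `X` -/
  dim : ℕ
  /-- the top self-intersection number `D ↦ D^{dim X}` -/
  degree : NS → ℝ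
  /-- `D ↦ h⁰(X, D)` -/
  h0 : NS → ℕ
  /-- the Iitaka dimension of a divisor class -/
  iitakaDim : NS → ℤ
  /-- semiample divisor classes (some positive multiple is basepoint free) -/
  IsSemiample : NS → Prop
  /-- the augmented base locus `B₊(D)` -/
  augBaseLocus : NS → Set Point
  /-- numerical classes (as functionals on `NS`) of rational curves on `X`
  that deform to cover `X` -/
  movingRationalCurves : Set (NS →ₗ[ℝ] ℝ)
  /-- numerical classes of nef curves on `X` -/
  nefCurves : Set (NS →ₗ[ℝ] ℝ)
  /-- the group of ℝ-divisors on `X` (not modulo numerical equivalence) -/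
  Div : Type
  [addCommGroupDiv : AddCommGroup Div]
  [moduleDiv : Module ℝ Div]
  /-- the numerical class of a divisor -/
  cls : Div →ₗ[ℝ] NS
  /-- the effective divisors -/
  EffectiveDiv : Set Div
  /-- a canonical divisor `K_X` -/
  canonicalDiv : Div
  cls_canonicalDiv : cls canonicalDiv = canonicalClass
  /-- the pair `(X, Δ)` has terminal singularities -/
  PairTerminal : Div → Prop
  -- qualitative geometric predicates
  IsSmooth : Prop
  IsProjective : Prop
  IsUniruled : Prop
  IsNormal : Prop
  IsGorenstein : Prop
  IsRational : Prop
  IsRationallyConnected : Prop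
  /-- `X` is a generalized flag variety: a projective homogeneous space for a
  connected linear algebraic group -/
  IsFlagVariety : Prop
  /-- `X` is `ℚ`-factorial with terminal singularities -/
  IsQFactorialTerminal : Prop
  /-- `X` is birational to a log-Fano variety -/
  BirationalToLogFano : Prop
  /-- `X` has at worst canonical singularities -/
  HasCanonicalSingularities : Prop
  /-- classes numerically equivalent to an effective divisor which is
  exceptional for a birational map -/
  IsExceptionalClass : NS → Prop

attribute [instance] Variety.topPoint Variety.addCommGroupNS Variety.moduleNS
  Variety.finDimNS Variety.topNS Variety.topAddGroupNS Variety.contSMulNS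
  Variety.t2NS Variety.addCommGroupDiv Variety.moduleDiv

namespace Variety

variable (X : Variety)

def IsBig (D : X.NS) : Prop := D ∈ X.bigCone

def IsNef (D : X.NS) : Prop := D ∈ X.nefCone

def IsAmple (D : X.NS) : Prop := D ∈ X.ampleCone

def IsPseudoEffective (D : X.NS) : Prop := D ∈ X.effCone

/-- the Fujita invariant `a(X, L) = min { t ∈ ℝ | t[L] + [K_X] ∈ Λ_eff(X) }` -/
def fujita (D : X.NS) : ℝ :=
  sInf {t : ℝ | t • D + X.canonicalClass ∈ X.effCone}

/-- the adjoint class `a(X,L)·[L] + [K_X]` -/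
def adjoint (D : X.NS) : X.NS := X.fujita D • D + X.canonicalClass

/-- the minimal supported face of `Λ_eff(X)` containing `D`: the intersection
of all faces cut out by linear functionals that are non-negative on the
pseudo-effective cone and vanish at `D`. -/
def minimalFace (D : X.NS) : Set X.NS :=
  ⋂ σ ∈ {σ : X.NS →ₗ[ℝ] ℝ | (∀ v ∈ X.effCone, 0 ≤ σ v) ∧ σ D = 0},
    {v ∈ X.effCone | σ v = 0}

/-- the invariant `b(X, L)`: the codimension of the minimal supported face of
`Λ_eff(X)` containing the adjoint class `a(X,L)[L] + [K_X]`. -/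
def bConst (D : X.NS) : ℕ :=
  Module.finrank ℝ X.NS -
    Module.finrank ℝ (Submodule.span ℝ (X.minimalFace (X.adjoint D)))

/-- a class `D` is rigid if `h⁰(X, mD) = 1` for all sufficiently divisible `m` -/
def IsRigid (D : X.NS) : Prop :=
  ∃ m₀ : ℕ, 0 < m₀ ∧ ∀ m : ℕ, m₀ ∣ m → X.h0 ((m : ℝ) • D) = 1

end Variety

/-- An irreducible closed proper subvariety `Y ⊂ X`, together with the pullback
map of Néron–Severi spaces to (a resolution of singularities of) `Y`, through
which the invariants `a(Y, L)` and `b(Y, L)` are computed. -/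
structure Subvariety (X : Variety) where
  /-- (a resolution of singularities of) `Y` -/
  toVariety : Variety
  carrier : Set X.Point
  isClosed : IsClosed carrier
  isIrreducible : IsIrreducible carrier
  ne_univ : carrier ≠ Set.univ
  /-- the pullback of numerical classes from `X` to (a resolution of) `Y` -/
  restrict : X.NS →ₗ[ℝ] toVariety.NS
  /-- the `L`-degree `D ↦ D^{dim Y} · Y` -/
  degL : X.NS → ℝ

namespace Subvariety

variable {X : Variety} (Y : Subvariety X)

/-- `a(Y, L)`, computed on a resolution of `Y` -/
def fujita (D : X.NS) : ℝ := Y.toVariety.fujita (Y.restrict D)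

/-- `b(Y, L)`, computed on a resolution of `Y` -/
def bConst (D : X.NS) : ℕ := Y.toVariety.bConst (Y.restrict D)

/-- `L` is big on `Y` -/
def IsBigOn (D : X.NS) : Prop := Y.toVariety.IsBig (Y.restrict D)

end Subvariety

/-- A birational (contraction) map `φ : X ⇢ X'`, recorded through its
pushforward on Néron–Severi spaces. -/
structure BirationalContraction (X X' : Variety) where
  pushforward : X.NS →ₗ[ℝ] X'.NS

/-- A family of subvarieties of `X`: a family of effective cycles whose general
member is irreducible and reduced, over a base `W`. -/
structure FamilyOfSubvarieties (X : Variety) where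
  W : Type
  [topW : TopologicalSpace W]
  member : W → Subvariety X

attribute [instance] FamilyOfSubvarieties.topW

/-- the evaluation map of the family is dominant -/
def FamilyOfSubvarieties.IsDominant {X : Variety} (F : FamilyOfSubvarieties X) : Prop :=
  Dense (⋃ w : F.W, (F.member w).carrier)


/-!
For `D` in the interior of a closed convex cone `C`, the set of `t` with `t • D + K ∈ C` is
a closed ray `[a(D), ∞)`: it is upward closed since `D ∈ C`, nonempty since `D + s • K` stays in
`C` for small `s > 0`, and bounded below unless `C` is everything, because otherwise `-D` would be
a limit of points of `C`, putting `0 = D + (-D)` in the interior of `C`. Consequently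
`b < a(D) ↔ b • D + K ∉ C` and `a(D) < b ↔ b • D + K ∈ interior C`; both right-hand sides are
open conditions on `D`, so `a` is continuous on the interior.
-/

namespace ConvexCone

open Set Filter Topology Pointwise

variable {E : Type*} [AddCommGroup E] [Module ℝ E] {C : ConvexCone ℝ E}

theorem smul_add_mem_of_le {K D : E} (hD : D ∈ C) {t t' : ℝ} (ht : t • D + K ∈ C)
    (htt' : t ≤ t') : t' • D + K ∈ C := by
  obtain htt' | rfl := htt'.lt_or_eq
  · have : t' • D + K = (t' - t) • D + (t • D + K) := by module
    exact this ▸ C.add_mem (C.smul_mem (sub_pos.2 htt') hD) ht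
  · exact ht

variable [TopologicalSpace E]

theorem add_mem_interior [IsTopologicalAddGroup E] {u v : E} (hu : u ∈ interior (C : Set E))
    (hv : v ∈ C) : u + v ∈ interior (C : Set E) :=
  interior_maximal (add_subset_iff.2 fun _ ha _ hb ↦ C.add_mem (interior_subset ha) hb)
    isOpen_interior.add_right (add_mem_add hu hv)

variable [ContinuousSMul ℝ E]

variable (C) in
theorem coe_eq_univ_of_zero_mem_interior (h : (0 : E) ∈ interior (C : Set E)) :
    (C : Set E) = univ := by
  refine eq_univ_of_forall fun x ↦ ?_
  obtain ⟨r, hr, hx⟩ := ((absorbent_nhds_zero (𝕜 := ℝ) (mem_interior_iff_mem_nhds.1 h)).absorbs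
    (x := x)).exists_pos
  obtain ⟨y, hy, rfl⟩ := hx r (by rw [Real.norm_of_nonneg hr.le]) rfl
  exact C.smul_mem hr hy

theorem smul_mem_interior {c : ℝ} (hc : 0 < c) {x : E} (hx : x ∈ interior (C : Set E)) :
    c • x ∈ interior (C : Set E) := by
  have : c • interior (C : Set E) ⊆ interior (C : Set E) := by
    rw [← interior_smul₀ hc.ne']
    exact interior_mono (smul_set_subset_iff.2 fun _ hy ↦ C.smul_mem hc hy)
  exact this (smul_mem_smul_set hx)

variable [IsTopologicalAddGroup E]

theorem exists_smul_add_mem {D : E} (hD : D ∈ interior (C : Set E)) (K : E) :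
    ∃ t : ℝ, t • D + K ∈ C := by
  have hcont : Continuous fun s : ℝ ↦ D + s • K := by fun_prop
  have hnear : ∀ᶠ s in 𝓝 (0 : ℝ), D + s • K ∈ C :=
    hcont.continuousAt.eventually_mem (by simpa using mem_interior_iff_mem_nhds.1 hD)
  obtain ⟨s, hs, hsK⟩ := hnear.exists_gt
  refine ⟨s⁻¹, ?_⟩
  have : s⁻¹ • (D + s • K) = s⁻¹ • D + K := by
    rw [smul_add, smul_smul, inv_mul_cancel₀ hs.ne', one_smul]
  exact this ▸ C.smul_mem (inv_pos.2 hs) hsK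

theorem bddBelow_setOf_smul_add_mem (hC : IsClosed (C : Set E)) (huniv : (C : Set E) ≠ univ)
    {D : E} (hD : D ∈ interior (C : Set E)) (K : E) : BddBelow {t : ℝ | t • D + K ∈ C} := by
  have hnegD : -D ∉ C := fun h ↦
    huniv (C.coe_eq_univ_of_zero_mem_interior (by simpa using add_mem_interior hD h))
  have hcont : Continuous fun s : ℝ ↦ -D + s • K := by fun_prop
  have hnear : ∀ᶠ s in 𝓝[>] (0 : ℝ), -D + s • K ∉ C :=
    nhdsWithin_le_nhds <| hcont.continuousAt.eventually_mem <|
      hC.isOpen_compl.mem_nhds (by simpa using hnegD)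
  have hfar : ∀ᶠ t : ℝ in atBot, t • D + K ∉ C := by
    filter_upwards [(tendsto_inv_atTop_nhdsGT_zero.comp tendsto_neg_atBot_atTop).eventually hnear,
      eventually_lt_atBot (0 : ℝ)] with t ht hneg htC
    have : (-t)⁻¹ • (t • D + K) = -D + (-t)⁻¹ • K := by
      rw [smul_add, smul_smul, inv_neg, neg_mul, inv_mul_cancel₀ hneg.ne, neg_one_smul]
    exact ht (this ▸ C.smul_mem (by simpa using hneg) htC)
  obtain ⟨a, ha⟩ := hfar.exists_forall_of_atBot
  exact ⟨a, fun t ht ↦ le_of_not_gt fun hta ↦ ha t hta.le ht⟩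

variable (C) in
/-- With `C = Λ_eff(X)` and `K = [K_X]` this is `a(X, D)`. -/
def fujita (K D : E) : ℝ := sInf {t : ℝ | t • D + K ∈ C}

section

variable (hC : IsClosed (C : Set E)) (huniv : (C : Set E) ≠ univ) {K D : E}
  (hD : D ∈ interior (C : Set E))
include hC huniv hD

theorem setOf_smul_add_mem_eq_Ici : {t : ℝ | t • D + K ∈ C} = Ici (C.fujita K D) := by
  have hclosed : IsClosed {t : ℝ | t • D + K ∈ C} := hC.preimage (by fun_prop)
  have hmem : C.fujita K D • D + K ∈ C :=
    hclosed.csInf_mem (exists_smul_add_mem hD K) (bddBelow_setOf_smul_add_mem hC huniv hD K)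
  ext t
  exact ⟨fun ht ↦ csInf_le (bddBelow_setOf_smul_add_mem hC huniv hD K) ht,
    smul_add_mem_of_le (interior_subset hD) hmem⟩

theorem lt_fujita_iff {b : ℝ} : b < C.fujita K D ↔ b • D + K ∉ C := by
  rw [← not_le, ← mem_Ici, ← setOf_smul_add_mem_eq_Ici hC huniv hD]
  rfl

theorem fujita_lt_iff {b : ℝ} : C.fujita K D < b ↔ b • D + K ∈ interior (C : Set E) := by
  have hS := setOf_smul_add_mem_eq_Ici hC huniv hD (K := K)
  constructor
  · intro hb
    have hmem : C.fujita K D • D + K ∈ C := hS.ge self_mem_Ici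
    have : b • D + K = (b - C.fujita K D) • D + (C.fujita K D • D + K) := by module
    exact this ▸ add_mem_interior (smul_mem_interior (sub_pos.2 hb) hD) hmem
  · intro hb
    have hopen : IsOpen {t : ℝ | t • D + K ∈ interior (C : Set E)} :=
      isOpen_interior.preimage (by fun_prop)
    rw [← mem_Ioi, ← interior_Ici, ← hS]
    have hsub : {t : ℝ | t • D + K ∈ interior (C : Set E)} ⊆ {t | t • D + K ∈ C} :=
      fun _ ht ↦ interior_subset (s := (C : Set E)) ht
    exact interior_maximal hsub hopen hb

end

theorem continuousOn_fujita (hC : IsClosed (C : Set E)) (K : E) :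
    ContinuousOn (C.fujita K) (interior (C : Set E)) := by
  by_cases huniv : (C : Set E) = univ
  · -- the defining set is all of `ℝ`, whose `sInf` is `0` by convention
    have : C.fujita K = fun _ ↦ 0 := by
      funext D
      simp [fujita, ← SetLike.mem_coe, huniv]
    exact this ▸ continuousOn_const
  intro D hD
  rw [ContinuousWithinAt, tendsto_order]
  have hcont (b : ℝ) : Continuous fun D : E ↦ b • D + K := by fun_prop
  refine ⟨fun b hb ↦ ?_, fun b hb ↦ ?_⟩
  · filter_upwards [nhdsWithin_le_nhds <| (hcont b).continuousAt.eventually_mem <|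
      hC.isOpen_compl.mem_nhds ((lt_fujita_iff hC huniv hD).1 hb), self_mem_nhdsWithin]
      with D' hD'b hD'
    exact (lt_fujita_iff hC huniv hD').2 hD'b
  · filter_upwards [nhdsWithin_le_nhds <| (hcont b).continuousAt.eventually_mem <|
      isOpen_interior.mem_nhds ((fujita_lt_iff hC huniv hD).1 hb), self_mem_nhdsWithin]
      with D' hD'b hD'
    exact (fujita_lt_iff hC huniv hD').2 hD'b

end ConvexCone

namespace Variety

variable (X : Variety)

def effConvexCone : ConvexCone ℝ X.NS where
  carrier := X.effCone
  smul_mem' c hc v hv := X.effCone_smul c hc.le v hv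
  add_mem' u hu v hv := by
    have hmid := X.effCone_convex hu hv (by norm_num : (0 : ℝ) ≤ 1 / 2)
      (by norm_num : (0 : ℝ) ≤ 1 / 2) (by norm_num)
    convert X.effCone_smul 2 zero_le_two _ hmid using 1
    module

end Variety

theorem fujita_continuousOn_bigCone_general
    (X : Variety) :
    ContinuousOn X.fujita X.bigCone := by
  rw [X.bigCone_eq]
  exact X.effConvexCone.continuousOn_fujita X.effCone_closed X.canonicalClass

/-- Let `X` be a smooth projective variety over an
algebraically closed field of characteristic zero.  The Fujita invariant
`D ↦ a(X, D)` is continuous on the big cone `Big¹(X) ⊂ NS(X, ℝ)`. -/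
theorem fujita_continuousOn_bigCone
    (X : Variety) (hsmooth : X.IsSmooth) (hproj : X.IsProjective) :
    ContinuousOn X.fujita X.bigCone :=
  fujita_continuousOn_bigCone_general X
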